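/- Let φ ∈ L^∞(𝕋ⁿ). If the Toeplitz operator T_{φ,△ₙ} is the zero operator on H²(∂_d△ₙ), then φ = 0 almost everywhere on 𝕋ⁿ. Consequently the map φ ↦ T_{φ,△ₙ} from L^∞(𝕋ⁿ) to bounded operators on H²(∂_d△ₙ) is injective. -/

import Mathlib

open MeasureTheory Filter Topology ComplexConjugate

noncomputable section

instance fact_one_pos : Fact ((0:ℝ) < 1) := ⟨one_pos⟩

abbrev Torus (n : ℕ) := Fin n → AddCircle (1 : ℝ)

abbrev L2T (n : ℕ) := Lp ℂ 2 (volume : Measure (Torus n))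

abbrev LinfT (n : ℕ) := Lp ℂ ⊤ (volume : Measure (Torus n))

def char {n : ℕ} (α : Fin n → ℤ) : Torus n → ℂ := fun x => ∏ j, fourier (α j) (x j)

lemma char_continuous {n : ℕ} (α : Fin n → ℤ) : Continuous (char α) :=
  continuous_finsetProd _ fun j _ => (fourier (α j)).continuous.comp (continuous_apply j)

lemma char_memLp {n : ℕ} (α : Fin n → ℤ) (p : ENNReal) :
    MemLp (char α) p (volume : Measure (Torus n)) := by
  refine (memLp_top_of_bound ((char_continuous α).aestronglyMeasurable) 1 ?_).mono_exponent le_top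
  filter_upwards with x
  simp only [char, norm_prod]
  calc ∏ j, ‖fourier (α j) (x j)‖
      = ∏ j : Fin n, (1:ℝ) := by
        refine Finset.prod_congr rfl fun j _ => ?_
        rw [fourier_apply]; exact Circle.norm_coe _
    _ ≤ 1 := by simp

def charL2 {n : ℕ} (α : Fin n → ℤ) : L2T n := (char_memLp α 2).toLp (char α)

def hardyT (n : ℕ) : Submodule ℂ (L2T n) :=
  (Submodule.span ℂ
    (charL2 '' {α : Fin n → ℤ | ∀ k : Fin n, 0 ≤ (∑ j ∈ Finset.Iic k, α j) + (k.val : ℤ)})).topologicalClosure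

def hardyD (n : ℕ) : Submodule ℂ (L2T n) :=
  (Submodule.span ℂ (charL2 '' {α : Fin n → ℤ | ∀ j, 0 ≤ α j})).topologicalClosure

instance hardyT.completeSpace (n : ℕ) : CompleteSpace (hardyT n) :=
  (Submodule.isClosed_topologicalClosure _).completeSpace_coe

instance hardyD.completeSpace (n : ℕ) : CompleteSpace (hardyD n) :=
  (Submodule.isClosed_topologicalClosure _).completeSpace_coe

def IsToeplitzOn {n : ℕ} (K : Submodule ℂ (L2T n)) (φ : Torus n → ℂ) (T : K →L[ℂ] K) : Prop :=
  ∀ f g : K,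
    (inner ℂ ((g : L2T n)) ((T f : L2T n)) : ℂ) =
      ∫ x, conj ((g : L2T n) x) * (φ x * (f : L2T n) x) ∂volume

def IsCoordMult {n : ℕ} (j : Fin n) (M : hardyT n →L[ℂ] hardyT n) : Prop :=
  ∀ f : hardyT n,
    ((M f : L2T n) : Torus n → ℂ) =ᵐ[volume]
      fun x => fourier 1 (x j) * ((f : L2T n) : Torus n → ℂ) x

def IsHankelT {n : ℕ} (φ : Torus n → ℂ) (H : hardyT n →L[ℂ] L2T n) : Prop :=
  (∀ f : hardyT n, H f ∈ (hardyT n)ᗮ) ∧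
    ∀ f : hardyT n, ∀ g : L2T n, g ∈ (hardyT n)ᗮ →
      (inner ℂ g (H f) : ℂ) = ∫ x, conj (g x) * (φ x * (f : L2T n) x) ∂volume

def IsAnalyticSymbolF {n : ℕ} (φ : Torus n → ℂ) : Prop :=
  ∀ α : Fin n → ℤ, (¬ ∀ k : Fin n, 0 ≤ ∑ j ∈ Finset.Iic k, α j) →
    ∫ x, φ x * char (-α) x ∂(volume : Measure (Torus n)) = 0

def IsInnerSymbolF {n : ℕ} (φ : Torus n → ℂ) : Prop :=
  IsAnalyticSymbolF φ ∧ ∀ᵐ x ∂(volume : Measure (Torus n)), ‖φ x‖ = 1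

def tauMap {n : ℕ} (x : Torus n) : Torus n := fun j => ∑ k ∈ Finset.Ici j, x k

def sigmaMap {n : ℕ} (x : Torus n) : Torus n :=
  fun j => if h : (j : ℕ) + 1 < n then x j - x ⟨(j : ℕ) + 1, h⟩ else x j

def jacF {n : ℕ} (x : Torus n) : ℂ := ∏ j : Fin n, fourier (j.val : ℤ) (x j)

def jacInvF {n : ℕ} (x : Torus n) : ℂ :=
  ∏ j : Fin n, fourier (if j.val = 0 then (0 : ℤ) else -1) (x j)

/-!
Testing the Toeplitz identity on `f = ζ^α`, `g = ζ^β` with `α, β ∈ ℕⁿ ⊆ 𝓘` shows that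
`⟨ζ^β, T ζ^α⟩ = ∫ φ ζ^(α - β)`. Every `γ ∈ ℤⁿ` is such a difference (`γ = γ⁺ - γ⁻`), so `T`
determines every Fourier coefficient of `φ`. These determine `φ ∈ L^∞ ⊆ L²`, because the characters
span a dense subspace of `L²(𝕋ⁿ)` (Stone–Weierstrass).
-/

section InnerProductSpace

variable {𝕜 E ι : Type*} [RCLike 𝕜] [NormedAddCommGroup E] [InnerProductSpace 𝕜 E]

theorem ext_inner_left_of_topologicalClosure_span_eq_top {v : ι → E}
    (hv : (Submodule.span 𝕜 (Set.range v)).topologicalClosure = ⊤) {x y : E}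
    (h : ∀ i, inner 𝕜 (v i) x = inner 𝕜 (v i) y) : x = y := by
  refine (Submodule.dense_iff_topologicalClosure_eq_top.mpr hv).eq_of_inner_right 𝕜 fun u hu => ?_
  induction hu using Submodule.span_induction with
  | mem u hu => obtain ⟨i, rfl⟩ := hu; exact h i
  | zero => simp
  | add u w _ _ hu hw => rw [inner_add_left, inner_add_left, hu, hw]
  | smul c u _ hu => rw [inner_smul_left, inner_smul_left, hu]

end InnerProductSpace

namespace UnitAddTorus

variable {d : Type*} [Fintype d] {μ : Measure (UnitAddTorus d)} [IsFiniteMeasure μ]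
  [μ.WeaklyRegular]

variable (μ) in
theorem span_toLp_mFourier_closure_eq_top {p : ENNReal} [Fact (1 ≤ p)] (hp : p ≠ ⊤) :
    (Submodule.span ℂ (Set.range fun γ : d → ℤ => (mFourier γ).toLp p μ ℂ)).topologicalClosure
      = ⊤ := by
  simpa only [Submodule.map_span, ContinuousLinearMap.coe_coe, ← Set.range_comp,
    Function.comp_def] using
    (ContinuousMap.toLp_denseRange ℂ μ ℂ hp).topologicalClosure_map_submodule
      span_mFourier_closure_eq_top

theorem _root_.MeasureTheory.Lp.ext_integral_mul_mFourier {φ ψ : Lp ℂ ⊤ μ}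
    (h : ∀ γ, ∫ x, φ x * mFourier γ x ∂μ = ∫ x, ψ x * mFourier γ x ∂μ) : φ = ψ := by
  have memL2 (f : Lp ℂ ⊤ μ) : MemLp f 2 μ := (Lp.memLp f).mono_exponent le_top
  have inner_toLp (f : Lp ℂ ⊤ μ) (γ : d → ℤ) :
      inner ℂ ((mFourier γ).toLp (2 : ENNReal) μ ℂ) ((memL2 f).toLp f)
        = ∫ x, f x * mFourier (-γ) x ∂μ := by
    rw [L2.inner_def]
    refine integral_congr_ae ?_
    filter_upwards [ContinuousMap.coeFn_toLp (p := 2) (𝕜 := ℂ) μ (mFourier γ),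
      (memL2 f).coeFn_toLp] with x hγ hf
    rw [hγ, hf, RCLike.inner_apply', mFourier_neg, mul_comm]
  refine Lp.ext ((MemLp.toLp_eq_toLp_iff (memL2 φ) (memL2 ψ)).mp ?_)
  exact ext_inner_left_of_topologicalClosure_span_eq_top
    (span_toLp_mFourier_closure_eq_top μ (p := 2) ENNReal.ofNat_ne_top) fun γ => by
      rw [inner_toLp, inner_toLp, h]

end UnitAddTorus

open UnitAddTorus

lemma char_eq_mFourier {n : ℕ} (α : Fin n → ℤ) : char α = ⇑(mFourier α) := rfl

lemma charL2_mem_hardyT {n : ℕ} {α : Fin n → ℤ} (hα : 0 ≤ α) : charL2 α ∈ hardyT n :=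
  Submodule.le_topologicalClosure _ <| Submodule.subset_span
    ⟨α, fun _ => add_nonneg (Finset.sum_nonneg fun j _ => hα j) (Nat.cast_nonneg _), rfl⟩

lemma IsToeplitzOn.integral_mul_char_sub {n : ℕ} {K : Submodule ℂ (L2T n)} {φ : LinfT n}
    {T : K →L[ℂ] K} (hT : IsToeplitzOn K φ T) {α β : Fin n → ℤ} (hα : charL2 α ∈ K)
    (hβ : charL2 β ∈ K) :
    ∫ x, φ x * char (α - β) x = inner ℂ (charL2 β) (T ⟨charL2 α, hα⟩ : L2T n) := by
  refine Eq.trans ?_ (hT ⟨charL2 α, hα⟩ ⟨charL2 β, hβ⟩).symm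
  refine integral_congr_ae ?_
  filter_upwards [(char_memLp α 2).coeFn_toLp, (char_memLp β 2).coeFn_toLp] with x hαx hβx
  simp only [charL2] at hαx hβx ⊢
  rw [hαx, hβx]
  simp only [char_eq_mFourier, sub_eq_add_neg, mFourier_add, mFourier_neg]
  ring

theorem stmt6 {n : ℕ} :
    (∀ (φ : LinfT n) (T : hardyT n →L[ℂ] hardyT n),
        IsToeplitzOn (hardyT n) (⇑φ) T → T = 0 → φ = 0) ∧
    (∀ (φ₁ φ₂ : LinfT n) (T₁ T₂ : hardyT n →L[ℂ] hardyT n),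
        IsToeplitzOn (hardyT n) (⇑φ₁) T₁ → IsToeplitzOn (hardyT n) (⇑φ₂) T₂ →
        T₁ = T₂ → φ₁ = φ₂) := by
  have coeff_eq_inner (φ : LinfT n) (T : hardyT n →L[ℂ] hardyT n)
      (hT : IsToeplitzOn (hardyT n) φ T) (γ : Fin n → ℤ) :
      ∫ x, φ x * mFourier γ x = inner ℂ (charL2 γ⁻)
        (T ⟨charL2 γ⁺, charL2_mem_hardyT (posPart_nonneg γ)⟩ : L2T n) := by
    simpa only [posPart_sub_negPart, char_eq_mFourier] using hT.integral_mul_char_sub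
      (charL2_mem_hardyT (posPart_nonneg γ)) (charL2_mem_hardyT (negPart_nonneg γ))
  refine ⟨fun φ T hT hT0 => Lp.ext_integral_mul_mFourier fun γ => ?_,
    fun φ₁ φ₂ T₁ T₂ h₁ h₂ hT => Lp.ext_integral_mul_mFourier fun γ => ?_⟩
  · rw [coeff_eq_inner φ T hT, hT0, zero_apply, ZeroMemClass.coe_zero,
      inner_zero_right, eq_comm]
    refine integral_eq_zero_of_ae ?_
    filter_upwards [Lp.coeFn_zero ℂ ⊤ (volume : Measure (Torus n))] with x hx
    rw [hx, Pi.zero_apply, zero_mul]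
  · rw [coeff_eq_inner φ₁ T₁ h₁, coeff_eq_inner φ₂ T₂ h₂, hT]
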